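/- arXiv:1412.7666 — 5 statements merged into one kernel-verified Lean document; each statement's English description precedes it below -/
import Mathlib

section
/- The ring (R_n, ∗) of degree-n components of formal power series in variables x_0, x_1, x_2, …, with product defined on monomials by x_{i_1,…,i_n} ∗ x_{j_1,…,j_n} = x_{i_1+j_1,…,i_n+j_n} (indices written in weakly increasing order) and extended bilinearly, has no zero divisors. -/
def MonFun (n : ℕ) (d : Fin n →₀ ℕ) : Prop := Monotone fun i => d i

noncomputable def Rn (n : ℕ) : Subring (MvPowerSeries (Fin n) ℂ) where
  carrier := {f | ∀ d : Fin n →₀ ℕ, ¬ MonFun n d → MvPowerSeries.coeff d f = 0}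
  zero_mem' := by intro d _; simp
  one_mem' := by
    intro d hd
    rw [MvPowerSeries.coeff_one]
    rw [if_neg]
    intro h
    exact hd (by subst h; intro a b _; simp [MonFun])
  add_mem' := by
    intro a b ha hb d hd
    rw [map_add, ha d hd, hb d hd, add_zero]
  neg_mem' := by
    intro a ha d hd
    rw [map_neg, ha d hd, neg_zero]
  mul_mem' := by
    intro a b ha hb d hd
    rw [MvPowerSeries.coeff_mul]
    apply Finset.sum_eq_zero
    intro p hp
    rw [Finset.HasAntidiagonal.mem_antidiagonal] at hp
    by_cases h1 : MonFun n p.1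
    · by_cases h2 : MonFun n p.2
      · exact absurd (by
          subst hp
          intro i j hij
          simpa using add_le_add (h1 hij) (h2 hij)) hd
      · rw [hb p.2 h2, mul_zero]
    · rw [ha p.1 h1, zero_mul]

theorem stmt2 (n : ℕ) : ∀ a b : Rn n, a * b = 0 → a = 0 ∨ b = 0 :=
  fun _ _ => mul_eq_zero.mp
end

section
/- For a fixed standard Young tableau P of shape λ ⊢ n, the map b_St : 𝔔 ↦ (q_{P,Q(𝔔)}, Π(𝔔 − q_{P,Q(𝔔)})) is a bijection between the set of reverse plane partitions of shape λ and the product of the set of all P-pedestals {q_{P,Q} : Q a standard Young tableau of shape λ} with the set of partitions into at most n parts. -/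
/-- The type of nodes (cells) of a Young diagram. -/
abbrev Cell (μ : YoungDiagram) : Type := {c : ℕ × ℕ // c ∈ μ.cells}

/-- `T` is a standard Young tableau of shape `μ` (with `n = |μ|` nodes):
a bijection from the nodes to `Fin n` increasing in both coordinates,
i.e. compatible with the natural partial (product) order on nodes. -/
def IsSYT (μ : YoungDiagram) (n : ℕ) (T : Cell μ ≃ Fin n) : Prop :=
  ∀ a b : Cell μ, a.1 ≤ b.1 → T a ≤ T b

/-- A reverse plane partition of shape `μ`: a filling by non-negative
integers weakly increasing along rows and columns. -/
def IsRPP (μ : YoungDiagram) (f : Cell μ → ℕ) : Prop :=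
  ∀ a b : Cell μ, a.1 ≤ b.1 → f a ≤ f b

/-- `l` (0-indexed) is a `(P,Q)`-disagreement position: the `(l+1)`-st node in
`Q`-order precedes the `l`-th node in `P`-order. -/
def disag {S : Type} {n : ℕ} (P Q : S ≃ Fin n) (l : ℕ) : Prop :=
  ∃ h : l + 1 < n, P (Q.symm ⟨l + 1, h⟩) < P (Q.symm ⟨l, Nat.lt_of_succ_lt h⟩)

open Classical in
/-- The `P`-pedestal of `Q`: `q_{P,Q}(α_k)` is the number of
`(P,Q)`-disagreement positions `l < k`, where `α_k` is the `k`-th node in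
`Q`-order. -/
noncomputable def ped {S : Type} {n : ℕ} (P Q : S ≃ Fin n) (s : S) : ℕ :=
  ((Finset.range (Q s : ℕ)).filter fun l => disag P Q l).card

/-- `Q` is the linear order induced by the filling `f` with `P`-tie-breaking:
`a` comes before `b` iff `f a < f b`, or `f a = f b` and `a ≺_P b`. -/
def Compat {S : Type} {n : ℕ} (P : S ≃ Fin n) (f : S → ℕ) (Q : S ≃ Fin n) : Prop :=
  ∀ a b : S, Q a < Q b ↔ (f a < f b ∨ (f a = f b ∧ P a < P b))

open Classical in
/-- The tableau `Q(𝔔)` induced by the filling `f = 𝔔` with `P`-tie-breaking. -/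
noncomputable def QOf {S : Type} {n : ℕ} (P : S ≃ Fin n) (f : S → ℕ) : S ≃ Fin n :=
  if h : ∃ Q : S ≃ Fin n, Compat P f Q then h.choose else P

/-- The map `b_St : 𝔔 ↦ (q_{P,Q(𝔔)}, Π(𝔔 − q_{P,Q(𝔔)}))`; the partition
`Π(R)` with at most `n` parts is recorded as the multiset of the `n` values
of `R` (zero parts included). -/
noncomputable def bSt {S : Type} [Fintype S] {n : ℕ} (P : S ≃ Fin n) (f : S → ℕ) :
    (S → ℕ) × Multiset ℕ :=
  (ped P (QOf P f), Finset.univ.val.map fun a => f a - ped P (QOf P f) a)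

/-!
A filling `f` induces the tableau `Q = Q(f)`. Reading `f` along `Q`, it has to increase weakly
between consecutive nodes and strictly at every `(P,Q)`-disagreement, so `f - q_{P,Q}` is weakly
increasing along `Q`; conversely `q_{P,Q}` plus any weakly increasing sequence read along `Q`
induces `Q` again, with ties in the sum broken exactly as `P` does. Hence the fillings inducing `Q`
are parametrised by the weakly increasing `n`-tuples, i.e. by the partitions with at most `n`
parts, and `Q` is recovered from its pedestal. Finally `Q(f)` is standard when `f` is a reverse
plane partition (since `P` is standard), and `q_{P,Q} + r ∘ Q` is one when `Q` is standard.
-/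

open Finset

variable {S : Type} {n : ℕ}

theorem Equiv.eq_of_lt_iff_lt {Q Q' : S ≃ Fin n} (h : ∀ a b, Q a < Q b ↔ Q' a < Q' b) :
    Q = Q' := by
  have hmono : StrictMono (Q.symm.trans Q') := fun i j hij => by
    simpa using (h (Q.symm i) (Q.symm j)).mp (by simpa using hij)
  ext a
  have := Fin.coe_orderIso_apply (hmono.orderIsoOfSurjective _ (Equiv.surjective _)) (Q a)
  simpa using this.symm

section MonotoneTuple

variable {α : Type*} [LinearOrder α]

theorem Monotone.eq_of_univ_val_map_eq {u v : Fin n → α} (hu : Monotone u) (hv : Monotone v)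
    (h : univ.val.map u = univ.val.map v) : u = v := by
  rw [Fin.univ_val_map, Fin.univ_val_map, Multiset.coe_eq_coe] at h
  exact List.ofFn_injective (h.eq_of_sortedLE hu.sortedLE_ofFn hv.sortedLE_ofFn)

theorem Multiset.exists_monotone_univ_val_map_eq {m : Multiset α} (hm : Multiset.card m = n) :
    ∃ r : Fin n → α, Monotone r ∧ univ.val.map r = m := by
  have hlen : (m.sort (· ≤ ·)).length = n := by rw [Multiset.length_sort, hm]
  refine ⟨fun k => (m.sort (· ≤ ·)).get (k.cast hlen.symm), fun i j hij =>
    (Multiset.pairwise_sort m (· ≤ ·)).rel_get_of_le hij, ?_⟩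
  rw [Fin.univ_val_map, ← List.ofFn_congr hlen, List.ofFn_get, Multiset.sort_eq]

end MonotoneTuple

section Pedestal

variable {P Q : S ≃ Fin n}

open Classical

noncomputable def disagCount (P Q : S ≃ Fin n) (k : ℕ) : ℕ :=
  ((range k).filter fun l => disag P Q l).card

theorem ped_eq_disagCount (s : S) : ped P Q s = disagCount P Q (Q s) := rfl

@[simp]
theorem disagCount_zero : disagCount P Q 0 = 0 := by
  simp [disagCount]

theorem disagCount_succ (l : ℕ) :
    disagCount P Q (l + 1) = disagCount P Q l + if disag P Q l then 1 else 0 := by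
  unfold disagCount
  rw [range_add_one, filter_insert]
  split
  · rw [card_insert_of_notMem (by simp)]
  · simp

theorem disagCount_mono : Monotone (disagCount P Q) := fun _ _ h =>
  card_le_card (filter_subset_filter _ (range_subset_range.mpr h))

theorem not_disag_of_disagCount_eq {k l j : ℕ} (hkl : k ≤ l) (hlj : l < j)
    (h : disagCount P Q k = disagCount P Q j) : ¬ disag P Q l := by
  intro hd
  have hstep := disagCount_succ (P := P) (Q := Q) l
  have hkl' := disagCount_mono (P := P) (Q := Q) hkl
  have hlj' := disagCount_mono (P := P) (Q := Q) (show l + 1 ≤ j by omega)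
  simp only [hd, if_true] at hstep
  omega

theorem le_of_forall_not_disag {i j : ℕ} (hij : i ≤ j) (hj : j < n)
    (hnd : ∀ l, i ≤ l → l < j → ¬ disag P Q l) :
    P (Q.symm ⟨i, hij.trans_lt hj⟩) ≤ P (Q.symm ⟨j, hj⟩) := by
  induction j, hij using Nat.le_induction with
  | base => rfl
  | succ j hij ih =>
    have hj' := hnd j hij j.lt_succ_self
    simp only [disag, not_exists, not_lt] at hj'
    exact (ih (by omega) fun l hil hlj => hnd l hil (by omega)).trans (hj' hj)

theorem lt_of_disagCount_eq {a b : S} (hab : Q a < Q b)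
    (h : disagCount P Q (Q a) = disagCount P Q (Q b)) : P a < P b := by
  have hle := le_of_forall_not_disag (P := P) hab.le (Q b).isLt
    fun l hal hlb => not_disag_of_disagCount_eq hal hlb h
  simp only [Fin.eta, Equiv.symm_apply_apply] at hle
  exact hle.lt_of_ne fun hP => hab.ne (congrArg Q (P.injective hP))

end Pedestal

section Compat

variable {P Q : S ≃ Fin n} {f : S → ℕ}

open Classical

theorem compat_iff_lt_iff_toLex_lt :
    Compat P f Q ↔ ∀ a b, Q a < Q b ↔ toLex (f a, P a) < toLex (f b, P b) := by
  simp only [Compat, Prod.Lex.toLex_lt_toLex]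

theorem compat_of_lt_imp_toLex_lt
    (h : ∀ a b, Q a < Q b → toLex (f a, P a) < toLex (f b, P b)) : Compat P f Q := by
  have hmono : StrictMono fun k => toLex (f (Q.symm k), P (Q.symm k)) := fun i j hij => by
    simpa using h (Q.symm i) (Q.symm j) (by simpa using hij)
  refine compat_iff_lt_iff_toLex_lt.mpr fun a b => ?_
  simpa using (hmono.lt_iff_lt (a := Q a) (b := Q b)).symm

theorem exists_compat (P : S ≃ Fin n) (f : S → ℕ) : ∃ Q, Compat P f Q := by
  let _ : Fintype S := .ofEquiv _ P.symm
  let _ : LinearOrder S := LinearOrder.lift' (fun s => toLex (f s, P s)) fun a b h =>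
    P.injective (Prod.ext_iff.mp (toLex_inj.mp h)).2
  let e : S ≃o Fin n :=
    (Fintype.orderIsoFinOfCardEq S ((Fintype.card_congr P).trans (Fintype.card_fin n))).symm
  exact ⟨e.toEquiv, compat_iff_lt_iff_toLex_lt.mpr fun a b => e.lt_iff_lt⟩

theorem Compat.unique {Q' : S ≃ Fin n} (hC : Compat P f Q) (hC' : Compat P f Q') : Q = Q' :=
  Equiv.eq_of_lt_iff_lt fun a b => (hC a b).trans (hC' a b).symm

theorem QOf_spec (P : S ≃ Fin n) (f : S → ℕ) : Compat P f (QOf P f) := by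
  rw [QOf, dif_pos (exists_compat P f)]
  exact (exists_compat P f).choose_spec

theorem QOf_eq_of_compat (hC : Compat P f Q) : QOf P f = Q :=
  (QOf_spec P f).unique hC

theorem Compat.apply_add_disag_le (hC : Compat P f Q) {l : ℕ} (h : l + 1 < n) :
    f (Q.symm ⟨l, Nat.lt_of_succ_lt h⟩) + (if disag P Q l then 1 else 0) ≤
      f (Q.symm ⟨l + 1, h⟩) := by
  have hlex := (hC _ _).mp
    (show Q (Q.symm ⟨l, Nat.lt_of_succ_lt h⟩) < Q (Q.symm ⟨l + 1, h⟩) by simp [Fin.lt_def])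
  split
  case isTrue hd =>
    obtain ⟨_, hPlt⟩ := hd
    rcases hlex with hlt | ⟨_, hPgt⟩
    · exact hlt
    · exact absurd hPlt hPgt.not_gt
  case isFalse => rcases hlex with hlt | ⟨heq, _⟩ <;> omega

theorem Compat.apply_add_disagCount_le (hC : Compat P f Q) {k j : ℕ} (hkj : k ≤ j)
    (hj : j < n) :
    f (Q.symm ⟨k, hkj.trans_lt hj⟩) + disagCount P Q j ≤
      f (Q.symm ⟨j, hj⟩) + disagCount P Q k := by
  induction j, hkj using Nat.le_induction with
  | base => rfl
  | succ j hkj ih =>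
    have hstep := hC.apply_add_disag_le hj
    have hcount := disagCount_succ (P := P) (Q := Q) j
    have := ih (by omega)
    split_ifs at hstep hcount <;> omega

theorem Compat.ped_le (hC : Compat P f Q) (s : S) : ped P Q s ≤ f s := by
  have h := hC.apply_add_disagCount_le (Nat.zero_le _) (Q s).isLt
  simp only [Fin.eta, Equiv.symm_apply_apply, disagCount_zero, add_zero] at h
  rw [ped_eq_disagCount]
  omega

theorem Compat.monotone_sub_ped (hC : Compat P f Q) :
    Monotone fun k => f (Q.symm k) - ped P Q (Q.symm k) := by
  intro k j hkj
  have hacc := hC.apply_add_disagCount_le (k := k) hkj j.isLt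
  have hk := hC.ped_le (Q.symm k)
  have hj := hC.ped_le (Q.symm j)
  simp only [Fin.eta, ped_eq_disagCount, Equiv.apply_symm_apply] at hacc hk hj ⊢
  omega

theorem compat_ped_add (P Q : S ≃ Fin n) {r : Fin n → ℕ} (hr : Monotone r) :
    Compat P (fun s => ped P Q s + r (Q s)) Q := by
  refine compat_of_lt_imp_toLex_lt fun a b hab => Prod.Lex.toLex_lt_toLex.mpr ?_
  have hped : ped P Q a ≤ ped P Q b := disagCount_mono (Fin.le_def.mp hab.le)
  have hrab := hr hab.le
  rcases (add_le_add hped hrab).lt_or_eq with hlt | heq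
  · exact .inl hlt
  · refine .inr ⟨heq, lt_of_disagCount_eq hab ?_⟩
    rw [← ped_eq_disagCount, ← ped_eq_disagCount]
    omega

theorem compat_iff_exists_monotone :
    Compat P f Q ↔ ∃ r : Fin n → ℕ, Monotone r ∧ f = fun s => ped P Q s + r (Q s) := by
  refine ⟨fun hC => ⟨_, hC.monotone_sub_ped, ?_⟩,
    fun ⟨r, hr, hf⟩ => hf ▸ compat_ped_add P Q hr⟩
  funext s
  simp only [Equiv.symm_apply_apply]
  have := hC.ped_le s
  omega

theorem ped_injective (P : S ≃ Fin n) : Function.Injective (ped P) := by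
  intro Q Q' h
  have hC : Compat P (ped P Q) Q := by simpa using compat_ped_add P Q (r := 0) monotone_const
  have hC' : Compat P (ped P Q') Q' := by simpa using compat_ped_add P Q' (r := 0) monotone_const
  exact hC.unique (h ▸ hC')

theorem bSt_ped_add [Fintype S] (P Q : S ≃ Fin n) {r : Fin n → ℕ} (hr : Monotone r) :
    bSt P (fun s => ped P Q s + r (Q s)) = (ped P Q, univ.val.map r) := by
  simp only [bSt, QOf_eq_of_compat (compat_ped_add P Q hr), add_tsub_cancel_left]
  rw [← Multiset.map_univ_val_equiv Q, Multiset.map_map]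
  rfl

end Compat

section Tableaux

variable {μ : YoungDiagram} {P Q : Cell μ ≃ Fin n}

theorem isSYT_of_compat {f : Cell μ → ℕ} (hP : IsSYT μ n P) (hf : IsRPP μ f)
    (hC : Compat P f Q) : IsSYT μ n Q := by
  intro a b hab
  rcases eq_or_ne a b with rfl | hne
  · exact le_rfl
  · refine ((hC a b).mpr ((hf a b hab).lt_or_eq.imp_right fun hfe => ⟨hfe, ?_⟩)).le
    exact (hP a b hab).lt_of_ne fun h => hne (P.injective h)

theorem isRPP_ped_add (hQ : IsSYT μ n Q) {r : Fin n → ℕ} (hr : Monotone r) :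
    IsRPP μ fun s => ped P Q s + r (Q s) := fun a b hab =>
  add_le_add (disagCount_mono (Fin.le_def.mp (hQ a b hab))) (hr (hQ a b hab))

end Tableaux

theorem stmt4_general (μ : YoungDiagram) (n : ℕ)
    (P : Cell μ ≃ Fin n) (hP : IsSYT μ n P) :
    Set.BijOn (bSt P) {f : Cell μ → ℕ | IsRPP μ f}
      (({g : Cell μ → ℕ | ∃ Q : Cell μ ≃ Fin n, IsSYT μ n Q ∧ g = ped P Q}) ×ˢ
        {m : Multiset ℕ | Multiset.card m = n}) := by
  refine ⟨fun f hf => ?_, fun f₁ _ f₂ _ h => ?_, fun ⟨g, m⟩ hgm => ?_⟩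
  · obtain ⟨r, hr, hfr⟩ := compat_iff_exists_monotone.mp (QOf_spec P f)
    have hQ := isSYT_of_compat hP hf (QOf_spec P f)
    rw [hfr, bSt_ped_add _ _ hr]
    exact ⟨⟨_, hQ, rfl⟩, by simp⟩
  · obtain ⟨r₁, hr₁, hf₁⟩ := compat_iff_exists_monotone.mp (QOf_spec P f₁)
    obtain ⟨r₂, hr₂, hf₂⟩ := compat_iff_exists_monotone.mp (QOf_spec P f₂)
    rw [hf₁, hf₂, bSt_ped_add _ _ hr₁, bSt_ped_add _ _ hr₂, Prod.mk.injEq] at h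
    rw [hf₁, hf₂, ped_injective P h.1, hr₁.eq_of_univ_val_map_eq hr₂ h.2]
  · obtain ⟨⟨Q, hQ, rfl⟩, hm⟩ := hgm
    obtain ⟨r, hr, rfl⟩ := Multiset.exists_monotone_univ_val_map_eq hm
    exact ⟨_, isRPP_ped_add hQ hr, bSt_ped_add P Q hr⟩

/-- for a fixed standard tableau `P` of shape `λ ⊢ n`, the map
`b_St` is a bijection from the set of reverse plane partitions of shape `λ`
onto the product of the set of `P`-pedestals with the set of partitions into
at most `n` parts (recorded as multisets of `n` natural numbers). -/
theorem stmt4 (μ : YoungDiagram) (n : ℕ) (hn : μ.card = n)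
    (P : Cell μ ≃ Fin n) (hP : IsSYT μ n P) :
    Set.BijOn (bSt P) {f : Cell μ → ℕ | IsRPP μ f}
      (({g : Cell μ → ℕ | ∃ Q : Cell μ ≃ Fin n, IsSYT μ n Q ∧ g = ped P Q}) ×ˢ
        {m : Multiset ℕ | Multiset.card m = n}) :=
  stmt4_general μ n P hP
end

section
/- The pedestal polynomial 𝔥_P(x) = Σ_{Q ∈ st_λ} Π_{α∈λ} x_{q_{P,Q}(α)} does not depend on the choice of the standard Young tableau P of shape λ: for any two standard tableaux P, P' of shape λ, 𝔥_P(x) = 𝔥_{P'}(x). -/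
open Classical in
/-- The pedestal polynomial `𝔥_P = Σ_Q Π_α x_{q_{P,Q}(α)}`, in commuting
variables `x_0, x_1, x_2, …`. -/
noncomputable def hp (μ : YoungDiagram) (n : ℕ) (P : Cell μ ≃ Fin n) : MvPolynomial ℕ ℤ :=
  ∑ Q ∈ Finset.univ.filter (fun Q : Cell μ ≃ Fin n => IsSYT μ n Q),
    ∏ c ∈ μ.cells.attach, MvPolynomial.X (ped P Q c)

/-!
If the nodes `a`, `b` carrying the consecutive entries `k`, `k + 1` of `P` are incomparable,
exchanging these two entries does not change `𝔥_P`. Indeed, the involution on standard tableaux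
`Q` that exchanges the entries at `a` and `b` when they are consecutive in `Q` (and fixes `Q`
otherwise) matches the monomials: in the first case `P` and `Q` are relabelled by the same
transposition of nodes, which merely permutes the pedestal; in the second case no comparison
between `Q`-consecutive nodes changes. Any two linear extensions of a finite poset are connected
by such exchanges, each of which removes one inversion between them.
-/

open Equiv

theorem Fin.swap_lt_swap_iff_of_adjacent {n : ℕ} {x y u v : Fin n}
    (hxy : (x : ℕ) + 1 = y ∨ (y : ℕ) + 1 = x) (h₁ : ¬(u = x ∧ v = y)) (h₂ : ¬(u = y ∧ v = x)) :
    swap x y u < swap x y v ↔ u < v := by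
  simp only [swap_apply_def]
  split_ifs <;> simp only [Fin.lt_def, Fin.ext_iff, not_and] at * <;> omega

theorem Fin.equiv_eq_refl_of_monotone {n : ℕ} (f : Fin n ≃ Fin n) (hf : Monotone f) :
    f = Equiv.refl _ :=
  Equiv.ext <| congrFun <|
    ((hf.strictMono_of_injective f.injective).range_inj strictMono_id).1 (by simp)

section LinearExtension

variable {S : Type} {n : ℕ}

theorem ped_trans_trans {T : Type} (e : T ≃ S) (P Q : S ≃ Fin n) (t : T) :
    ped (e.trans P) (e.trans Q) t = ped P Q (e t) := by
  classical
  unfold ped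
  simp only [trans_apply]
  congr 1
  exact Finset.filter_congr fun l _ => by simp [disag]

theorem exists_adjacent_inversion {P P' : S ≃ Fin n} (h : P ≠ P') :
    ∃ a b, (P a : ℕ) + 1 = P b ∧ P' b < P' a := by
  by_contra! hmono
  apply h
  obtain _ | m := n
  · exact Equiv.ext fun s => (P s).elim0
  have hrefl : P.symm.trans P' = Equiv.refl _ :=
    Fin.equiv_eq_refl_of_monotone _ <| Fin.monotone_iff_le_succ.2 fun i => hmono _ _ (by simp)
  exact Equiv.ext fun s => by simpa using congr($hrefl (P s)).symm

variable [DecidableEq S]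

theorem Equiv.swap_trans_lt_swap_trans_iff {P : S ≃ Fin n} {a b c d : S}
    (hadj : (P a : ℕ) + 1 = P b ∨ (P b : ℕ) + 1 = P a)
    (h₁ : ¬(c = a ∧ d = b)) (h₂ : ¬(c = b ∧ d = a)) :
    (swap a b).trans P c < (swap a b).trans P d ↔ P c < P d := by
  rw [trans_apply, trans_apply, P.injective.map_swap, P.injective.map_swap]
  exact Fin.swap_lt_swap_iff_of_adjacent hadj (by simpa [P.injective.eq_iff] using h₁)
    (by simpa [P.injective.eq_iff] using h₂)

theorem Monotone.swap_trans [Preorder S] {Q : S ≃ Fin n} (hQ : Monotone Q) {a b : S}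
    (hab : ¬a ≤ b) (hba : ¬b ≤ a) (hadj : (Q a : ℕ) + 1 = Q b ∨ (Q b : ℕ) + 1 = Q a) :
    Monotone ((swap a b).trans Q) := by
  intro c d hcd
  rcases eq_or_ne c d with rfl | hne
  · rfl
  refine ((swap_trans_lt_swap_trans_iff hadj ?_ ?_).2 ((hQ hcd).lt_of_ne (Q.injective.ne hne))).le
  · rintro ⟨rfl, rfl⟩; exact hab hcd
  · rintro ⟨rfl, rfl⟩; exact hba hcd

/-- Exchanging the entries at two nodes that are not consecutive in `Q` changes no comparison
between `Q`-consecutive nodes, hence no `(P, Q)`-disagreement. -/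
theorem ped_swap_trans {P Q : S ≃ Fin n} {a b : S} (hadj : (P a : ℕ) + 1 = P b)
    (hQ : ¬((Q a : ℕ) + 1 = Q b ∨ (Q b : ℕ) + 1 = Q a)) (s : S) :
    ped ((swap a b).trans P) Q s = ped P Q s := by
  classical
  unfold ped
  congr 1
  refine Finset.filter_congr fun l _ => exists_congr fun hl => ?_
  refine swap_trans_lt_swap_trans_iff (.inl hadj) ?_ ?_ <;>
    rintro ⟨rfl, rfl⟩ <;> simp at hQ

def swapIfAdjacent (a b : S) (Q : S ≃ Fin n) : S ≃ Fin n :=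
  if (Q a : ℕ) + 1 = Q b ∨ (Q b : ℕ) + 1 = Q a then (swap a b).trans Q else Q

theorem swapIfAdjacent_involutive (a b : S) :
    Function.Involutive (swapIfAdjacent (n := n) a b) := by
  intro Q
  by_cases hQ : (Q a : ℕ) + 1 = Q b ∨ (Q b : ℕ) + 1 = Q a
  · have hQ' : ((swap a b).trans Q a : ℕ) + 1 = (swap a b).trans Q b ∨
        ((swap a b).trans Q b : ℕ) + 1 = (swap a b).trans Q a := by
      simpa [or_comm] using hQ
    have hψQ : swapIfAdjacent a b Q = (swap a b).trans Q := if_pos hQ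
    rw [hψQ, swapIfAdjacent, if_pos hQ', ← trans_assoc, swap_swap, refl_trans]
  · have hψQ : swapIfAdjacent a b Q = Q := if_neg hQ
    rw [hψQ, hψQ]

theorem Monotone.swapIfAdjacent [Preorder S] {Q : S ≃ Fin n} (hQ : Monotone Q) {a b : S}
    (hab : ¬a ≤ b) (hba : ¬b ≤ a) : Monotone (swapIfAdjacent a b Q) := by
  unfold _root_.swapIfAdjacent
  split_ifs with hadj
  exacts [hQ.swap_trans hab hba hadj, hQ]

variable [Fintype S]

theorem prod_X_ped_swapIfAdjacent {R : Type*} [CommSemiring R] {P : S ≃ Fin n} {a b : S}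
    (hadj : (P a : ℕ) + 1 = P b) (Q : S ≃ Fin n) :
    ∏ s, (MvPolynomial.X (ped ((swap a b).trans P) (swapIfAdjacent a b Q) s) : MvPolynomial ℕ R) =
      ∏ s, MvPolynomial.X (ped P Q s) := by
  unfold swapIfAdjacent
  split_ifs with hQ
  · simp_rw [ped_trans_trans]
    exact Equiv.prod_comp (swap a b) fun s => MvPolynomial.X (ped P Q s)
  · simp_rw [ped_swap_trans hadj hQ]

def inversionSet (P P' : S ≃ Fin n) : Finset (S × S) :=
  Finset.univ.filter fun p => P p.1 < P p.2 ∧ P' p.2 < P' p.1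

theorem inversionSet_swap_trans_ssubset {P P' : S ≃ Fin n} {a b : S}
    (hadj : (P a : ℕ) + 1 = P b) (hinv : P' b < P' a) :
    inversionSet ((swap a b).trans P) P' ⊂ inversionSet P P' := by
  have hab : P a < P b := Fin.lt_def.2 (by omega)
  refine Finset.ssubset_iff_of_subset ?_ |>.2 ⟨(a, b), by simp [inversionSet, hab, hinv], ?_⟩
  · rintro ⟨c, d⟩
    simp only [inversionSet, Finset.mem_filter, Finset.mem_univ, true_and]
    refine fun ⟨hlt, hinv'⟩ => ⟨(swap_trans_lt_swap_trans_iff (.inl hadj) ?_ ?_).1 hlt, hinv'⟩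
    · rintro ⟨rfl, rfl⟩
      simp only [trans_apply, swap_apply_left, swap_apply_right] at hlt
      exact hlt.asymm hab
    · rintro ⟨rfl, rfl⟩
      exact hinv.asymm hinv'
  · rw [inversionSet, Finset.mem_filter]
    simp [hab.asymm]

variable [Preorder S] (R : Type*) [CommSemiring R]

open Classical in
noncomputable def pedestalPolynomial (P : S ≃ Fin n) : MvPolynomial ℕ R :=
  ∑ Q ∈ Finset.univ.filter (fun Q : S ≃ Fin n => Monotone Q), ∏ s, MvPolynomial.X (ped P Q s)

variable {R}

theorem pedestalPolynomial_swap_trans {P : S ≃ Fin n} {a b : S} (hab : ¬a ≤ b) (hba : ¬b ≤ a)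
    (hadj : (P a : ℕ) + 1 = P b) :
    pedestalPolynomial R ((swap a b).trans P) = pedestalPolynomial R P := by
  classical
  have hmaps : ∀ Q ∈ Finset.univ.filter (fun Q : S ≃ Fin n => Monotone Q),
      swapIfAdjacent a b Q ∈ Finset.univ.filter (fun Q : S ≃ Fin n => Monotone Q) := by
    intro Q hQ
    simp only [Finset.mem_filter, Finset.mem_univ, true_and] at hQ ⊢
    exact hQ.swapIfAdjacent hab hba
  symm
  exact Finset.sum_nbij' (swapIfAdjacent a b) (swapIfAdjacent a b) hmaps hmaps
    (fun Q _ => swapIfAdjacent_involutive a b Q) (fun Q _ => swapIfAdjacent_involutive a b Q)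
    (fun Q _ => (prod_X_ped_swapIfAdjacent hadj Q).symm)

theorem pedestalPolynomial_eq_of_monotone {P P' : S ≃ Fin n} (hP : Monotone P)
    (hP' : Monotone P') : pedestalPolynomial R P = pedestalPolynomial R P' := by
  by_cases h : P = P'
  · rw [h]
  obtain ⟨a, b, hadj, hinv⟩ := exists_adjacent_inversion h
  have hab : ¬a ≤ b := fun hab => (hP' hab).not_gt hinv
  have hba : ¬b ≤ a := fun hba => (hP hba).not_gt (Fin.lt_def.2 (by omega))
  rw [← pedestalPolynomial_swap_trans hab hba hadj]
  exact pedestalPolynomial_eq_of_monotone (hP.swap_trans hab hba (.inl hadj)) hP'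
termination_by (inversionSet P P').card
decreasing_by exact Finset.card_lt_card (inversionSet_swap_trans_ssubset hadj hinv)

end LinearExtension

theorem hp_eq_pedestalPolynomial (μ : YoungDiagram) (n : ℕ) (P : Cell μ ≃ Fin n) :
    hp μ n P = pedestalPolynomial ℤ P := by
  unfold hp pedestalPolynomial
  refine Finset.sum_congr ?_ fun Q _ => rfl
  ext Q
  simp only [Finset.mem_filter, Finset.mem_univ, true_and]
  rfl

theorem stmt8_general (μ : YoungDiagram) (n : ℕ)
    (P P' : Cell μ ≃ Fin n) (hP : IsSYT μ n P) (hP' : IsSYT μ n P') :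
    hp μ n P = hp μ n P' := by
  rw [hp_eq_pedestalPolynomial, hp_eq_pedestalPolynomial]
  exact pedestalPolynomial_eq_of_monotone hP hP'

/-- the pedestal polynomial does not depend on the choice of the
standard Young tableau `P`. -/
theorem stmt8 (μ : YoungDiagram) (n : ℕ) (hn : μ.card = n)
    (P P' : Cell μ ≃ Fin n) (hP : IsSYT μ n P) (hP' : IsSYT μ n P') :
    hp μ n P = hp μ n P' :=
  stmt8_general μ n P P' hP hP'
end

section
/- For any standard Young tableau P of shape λ ⊢ n, the polynomial π_λ(x) := Σ_{Q ∈ st_λ} x^{|q_{P,Q}|}, where |q_{P,Q}| = Σ_{α∈λ} q_{P,Q}(α), does not depend on the choice of P. -/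
/-- Volume of a filling of `μ`. -/
noncomputable def vol (μ : YoungDiagram) (f : Cell μ → ℕ) : ℕ :=
  ∑ c ∈ μ.cells.attach, f c

open Classical in
/-- `π_λ(x) = Σ_{Q ∈ st_λ} x^{|q_{P,Q}|}`. -/
noncomputable def piP (μ : YoungDiagram) (n : ℕ) (P : Cell μ ≃ Fin n) : Polynomial ℤ :=
  ∑ Q ∈ Finset.univ.filter (fun Q : Cell μ ≃ Fin n => IsSYT μ n Q),
    Polynomial.X ^ vol μ (ped P Q)

/-!
If `P ≠ P'` are linear extensions of the node order, some nodes `c, d` with consecutive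
`P`-labels appear in the opposite order in `P'`; they are incomparable, so swapping their
`P`-labels gives another standard tableau, closer to `P'` by one inversion. It therefore suffices
to show that `π_λ` is unchanged by such a swap. For this, send `Q` to the tableau with the labels
of `c, d` swapped when these labels are consecutive, and to `Q` otherwise. This is an involution on
`st_λ`. In the first case the word `P ∘ Q⁻¹` does not change; in the second it changes by
swapping two values that are not adjacent in it. In both cases the descent set of the word is
unchanged, and `|q_{P,Q}|` depends only on that descent set.
-/

open Finset

lemma swap_lt_swap_iff_of_covBy {α : Type*} [LinearOrder α] {a b u v : α} (hab : a ⋖ b)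
    (h₁ : ¬(u = a ∧ v = b)) (h₂ : ¬(u = b ∧ v = a)) :
    Equiv.swap a b u < Equiv.swap a b v ↔ u < v := by
  have key : ∀ x, x ≠ a → x ≠ b → (a < x ↔ b < x) ∧ (x < a ↔ x < b) := fun x ha hb =>
    ⟨⟨fun h => (hab.ge_of_gt h).lt_of_ne hb.symm, hab.lt.trans⟩,
     ⟨fun h => h.trans hab.lt, fun h => (hab.le_of_lt h).lt_of_ne ha⟩⟩
  have hlt := hab.lt
  simp only [Equiv.swap_apply_def]
  split_ifs <;> subst_vars <;> simp_all

lemma Monotone.trans_swap {S α : Type*} [Preorder S] [LinearOrder α] {T : S ≃ α}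
    (hT : Monotone T) {c d : S} (hcd : T c ⋖ T d) (hinc : ¬ c ≤ d) :
    Monotone (T.trans (Equiv.swap (T c) (T d))) := by
  intro x y hxy
  obtain hTxy | hTxy := (hT hxy).eq_or_lt
  · rw [T.injective hTxy]
  refine ((swap_lt_swap_iff_of_covBy hcd ?_ ?_).2 hTxy).le
  · rintro ⟨hx, hy⟩
    rw [T.injective hx, T.injective hy] at hxy
    exact hinc hxy
  · rintro ⟨hx, hy⟩
    rw [hx, hy] at hTxy
    exact hTxy.not_gt hcd.lt

section Pedestal

variable {S : Type} {n : ℕ}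

lemma exists_covBy_lt_of_ne {P P' : S ≃ Fin n} (h : P ≠ P') :
    ∃ c d : S, P c ⋖ P d ∧ P' d < P' c := by
  by_contra! hmono
  have hσ : StrictMono (P.symm.trans P') := by
    refine Monotone.strictMono_of_injective ?_ (Equiv.injective _)
    refine (monotone_iff_forall_covBy _).2 fun a b hab => hmono _ _ ?_
    simpa using hab
  refine h (Equiv.ext fun x => ?_)
  simpa using (congrFun hσ.eq_id (P x)).symm

def invCount [Fintype S] (P P' : S ≃ Fin n) : ℕ :=
  #{p : S × S | P p.1 < P p.2 ∧ P' p.2 < P' p.1}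

lemma invCount_trans_swap_lt [Fintype S] {P P' : S ≃ Fin n} {c d : S} (hcd : P c ⋖ P d)
    (hdesc : P' d < P' c) :
    invCount (P.trans (Equiv.swap (P c) (P d))) P' < invCount P P' := by
  unfold invCount
  refine card_lt_card (ssubset_iff_of_subset ?_ |>.2 ⟨(c, d), ?_, ?_⟩)
  · rw [Finset.subset_iff]
    rintro ⟨x, y⟩
    rw [mem_filter, mem_filter, Equiv.trans_apply, Equiv.trans_apply]
    rintro ⟨-, hxy, hdesc'⟩
    refine ⟨mem_univ _, (swap_lt_swap_iff_of_covBy hcd ?_ ?_).1 hxy, hdesc'⟩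
    · rintro ⟨hx, hy⟩
      rw [hx, hy, Equiv.swap_apply_left, Equiv.swap_apply_right] at hxy
      exact hxy.not_gt hcd.lt
    · rintro ⟨hx, hy⟩
      rw [P.injective hx, P.injective hy] at hdesc'
      exact hdesc'.not_gt hdesc
  · simpa using ⟨hcd.lt, hdesc⟩
  · rw [mem_filter, Equiv.trans_apply, Equiv.trans_apply, Equiv.swap_apply_left,
      Equiv.swap_apply_right]
    exact fun h => h.2.1.not_gt hcd.lt

lemma sum_ped_congr [Fintype S] {P₁ Q₁ P₂ Q₂ : S ≃ Fin n}
    (h : ∀ l, disag P₁ Q₁ l ↔ disag P₂ Q₂ l) :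
    ∑ s, ped P₁ Q₁ s = ∑ s, ped P₂ Q₂ s := by
  classical
  rw [← Q₁.symm.sum_comp, ← Q₂.symm.sum_comp]
  simp only [ped, Equiv.apply_symm_apply]
  exact sum_congr rfl fun k _ => congrArg card (filter_congr fun l _ => h l)

lemma disag_trans_swap_trans_swap (P Q : S ≃ Fin n) (c d : S) (l : ℕ) :
    disag (P.trans (Equiv.swap (P c) (P d))) (Q.trans (Equiv.swap (Q c) (Q d))) l ↔
      disag P Q l := by
  have hword :
      ∀ k, P (Q.symm (Equiv.swap (Q c) (Q d) k)) = Equiv.swap (P c) (P d) (P (Q.symm k)) :=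
    fun k => by simpa using (P.injective.comp Q.symm.injective).map_swap (Q c) (Q d) k
  simp only [disag, Equiv.trans_apply, Equiv.symm_trans_apply, Equiv.symm_swap, hword,
    Equiv.swap_apply_self]

lemma disag_trans_swap_of_not_covBy {P Q : S ≃ Fin n} {c d : S} (hcd : P c ⋖ P d)
    (hQ : ¬ (Q c ⋖ Q d ∨ Q d ⋖ Q c)) (l : ℕ) :
    disag (P.trans (Equiv.swap (P c) (P d))) Q l ↔ disag P Q l := by
  refine exists_congr fun hl => swap_lt_swap_iff_of_covBy hcd ?_ ?_ <;>
  · rintro ⟨h₁, h₂⟩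
    rw [P.injective.eq_iff, Q.symm_apply_eq] at h₁ h₂
    refine hQ ?_
    simp [Fin.covBy_iff, ← h₁, ← h₂]

open Classical in
noncomputable def swapIfCovBy (c d : S) (Q : S ≃ Fin n) : S ≃ Fin n :=
  if Q c ⋖ Q d ∨ Q d ⋖ Q c then Q.trans (Equiv.swap (Q c) (Q d)) else Q

lemma swapIfCovBy_of_covBy {c d : S} {Q : S ≃ Fin n} (h : Q c ⋖ Q d ∨ Q d ⋖ Q c) :
    swapIfCovBy c d Q = Q.trans (Equiv.swap (Q c) (Q d)) :=
  if_pos h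

lemma swapIfCovBy_of_not_covBy {c d : S} {Q : S ≃ Fin n} (h : ¬ (Q c ⋖ Q d ∨ Q d ⋖ Q c)) :
    swapIfCovBy c d Q = Q :=
  if_neg h

lemma swapIfCovBy_involutive (c d : S) : Function.Involutive (swapIfCovBy (n := n) c d) := by
  intro Q
  by_cases h : Q c ⋖ Q d ∨ Q d ⋖ Q c
  · have h' : (Q.trans (Equiv.swap (Q c) (Q d))) c ⋖ (Q.trans (Equiv.swap (Q c) (Q d))) d ∨
        (Q.trans (Equiv.swap (Q c) (Q d))) d ⋖ (Q.trans (Equiv.swap (Q c) (Q d))) c := by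
      simpa [or_comm] using h
    rw [swapIfCovBy_of_covBy h, swapIfCovBy_of_covBy h']
    ext x
    simp [Equiv.swap_comm (Q d) (Q c)]
  · rw [swapIfCovBy_of_not_covBy h, swapIfCovBy_of_not_covBy h]

lemma Monotone.swapIfCovBy [Preorder S] {Q : S ≃ Fin n} (hQ : Monotone Q) {c d : S}
    (hcd : ¬ c ≤ d) (hdc : ¬ d ≤ c) : Monotone (swapIfCovBy c d Q) := by
  by_cases h : Q c ⋖ Q d ∨ Q d ⋖ Q c
  · rw [swapIfCovBy_of_covBy h]
    rcases h with h | h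
    · exact hQ.trans_swap h hcd
    · rw [Equiv.swap_comm]
      exact hQ.trans_swap h hdc
  · rwa [swapIfCovBy_of_not_covBy h]

lemma sum_ped_trans_swap_swapIfCovBy [Fintype S] {P : S ≃ Fin n} {c d : S} (hcd : P c ⋖ P d)
    (Q : S ≃ Fin n) :
    ∑ s, ped (P.trans (Equiv.swap (P c) (P d))) (swapIfCovBy c d Q) s = ∑ s, ped P Q s := by
  refine sum_ped_congr fun l => ?_
  by_cases h : Q c ⋖ Q d ∨ Q d ⋖ Q c
  · rw [swapIfCovBy_of_covBy h, disag_trans_swap_trans_swap]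
  · rw [swapIfCovBy_of_not_covBy h, disag_trans_swap_of_not_covBy hcd h]

end Pedestal

lemma isSYT_iff_monotone {μ : YoungDiagram} {n : ℕ} {T : Cell μ ≃ Fin n} :
    IsSYT μ n T ↔ Monotone T :=
  Iff.rfl

lemma vol_eq_sum (μ : YoungDiagram) (f : Cell μ → ℕ) : vol μ f = ∑ c, f c := by
  rw [vol, univ_eq_attach]

open Classical in
lemma piP_trans_swap {μ : YoungDiagram} {n : ℕ} {P : Cell μ ≃ Fin n} {c d : Cell μ}
    (hcd : P c ⋖ P d) (hc : ¬ c ≤ d) (hd : ¬ d ≤ c) :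
    piP μ n P = piP μ n (P.trans (Equiv.swap (P c) (P d))) := by
  have hmaps : ∀ Q ∈ ({Q | IsSYT μ n Q} : Finset (Cell μ ≃ Fin n)),
      swapIfCovBy c d Q ∈ ({Q | IsSYT μ n Q} : Finset (Cell μ ≃ Fin n)) := by
    simpa only [mem_filter, mem_univ, true_and, isSYT_iff_monotone] using
      fun Q hQ => hQ.swapIfCovBy hc hd
  refine sum_nbij' (swapIfCovBy c d) (swapIfCovBy c d) hmaps hmaps
    (fun Q _ => swapIfCovBy_involutive c d Q) (fun Q _ => swapIfCovBy_involutive c d Q)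
    fun Q _ => ?_
  rw [vol_eq_sum, vol_eq_sum, sum_ped_trans_swap_swapIfCovBy hcd]

theorem stmt9_general (μ : YoungDiagram) (n : ℕ)
    (P P' : Cell μ ≃ Fin n) (hP : IsSYT μ n P) (hP' : IsSYT μ n P') :
    piP μ n P = piP μ n P' := by
  rw [isSYT_iff_monotone] at hP hP'
  induction hk : invCount P P' using Nat.strong_induction_on generalizing P with
  | _ k ih =>
  obtain rfl | hne := eq_or_ne P P'
  · rfl
  obtain ⟨c, d, hcd, hdesc⟩ := exists_covBy_lt_of_ne hne
  have hc : ¬ c ≤ d := fun h => (hP' h).not_gt hdesc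
  have hd : ¬ d ≤ c := fun h => (hP h).not_gt hcd.lt
  rw [piP_trans_swap hcd hc hd]
  exact ih _ (hk ▸ invCount_trans_swap_lt hcd hdesc) _ (hP.trans_swap hcd hc) rfl

/-- `π_λ(x) = Σ_{Q ∈ st_λ} x^{|q_{P,Q}|}` does not depend on `P`. -/
theorem stmt9 (μ : YoungDiagram) (n : ℕ) (hn : μ.card = n)
    (P P' : Cell μ ≃ Fin n) (hP : IsSYT μ n P) (hP' : IsSYT μ n P') :
    piP μ n P = piP μ n P' :=
  stmt9_general μ n P P' hP hP'
end

section
/- For any Young diagram λ ⊢ n and any standard tableau P of shape λ, π_λ(1) = |st_λ| (the number of standard Young tableaux of shape λ), and hence by the identity π_λ(x) = Π_{k=1}^n (1−x^k) / Π_{α∈λ}(1−x^{h_α}), taking the limit x → 1 recovers the hook length formula |st_λ| = n! / Π_{α∈λ} h_α. -/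
/-- The hook length of a node `c` of `μ`: the number of nodes in its row weakly
to the right plus the number of nodes in its column strictly below. -/
def hook (μ : YoungDiagram) (c : ℕ × ℕ) : ℕ :=
  (μ.cells.filter fun d => d.1 = c.1 ∧ c.2 ≤ d.2).card +
  (μ.cells.filter fun d => d.2 = c.2 ∧ c.1 < d.1).card

/-!
Each standard tableau `Q` contributes `x ^ |q_{P,Q}|` to `π_λ`, hence `1` at `x = 1`.

For the hook length formula, the entry `n` of a standard tableau sits in a corner `c`, so the
number `f^λ` of standard tableaux satisfies `f^λ = ∑_c f^{λ - c}`, and it suffices that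
`n! / H_λ`, with `H_λ = ∏_α h_α`, obeys the same recursion, i.e. `∑_c H_λ / H_{λ - c} = n`.
Fix `K` at least the number of rows and put `ℓ_i = λ_i + K - 1 - i`. The hooks in row `i`
together with the differences `ℓ_i - ℓ_b`, `b > i`, are exactly `1, …, ℓ_i`, so
`H_λ · ∏_{a < b} (ℓ_a - ℓ_b) = ∏_i ℓ_i!`. Removing the corner of row `i` lowers `ℓ_i` by one,
which gives `H_λ / H_{λ - c} = ℓ_i ∏_{j ≠ i} (1 - 1 / (ℓ_i - ℓ_j))`; this expression vanishes
on rows without a corner. Expanding the product and applying Lagrange interpolation to the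
polynomial `X` on every subset of the nodes shows that its sum over all `i` is
`∑ ℓ_i - (K choose 2) = n`.
-/

open Finset
open scoped Nat

theorem Finset.sum_sum_powerset_erase {ι M : Type*} [DecidableEq ι] [AddCommMonoid M]
    (s : Finset ι) (f : ι → Finset ι → M) :
    ∑ i ∈ s, ∑ t ∈ (s.erase i).powerset, f i t = ∑ t ∈ s.powerset, ∑ i ∈ t, f i (t.erase i) := by
  rw [sum_sigma', sum_sigma']
  refine sum_nbij' (fun p => ⟨insert p.1 p.2, p.1⟩) (fun q => ⟨q.2, q.1.erase q.2⟩)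
    ?_ ?_ ?_ ?_ ?_ <;> rintro ⟨a, t⟩ h <;> simp only [mem_sigma, mem_powerset] at h
  · simp only [mem_sigma, mem_powerset, mem_insert_self, and_true]
    exact insert_subset h.1 (h.2.trans (erase_subset a s))
  · simp only [mem_sigma, mem_powerset]
    exact ⟨h.1 h.2, erase_subset_erase t h.1⟩
  · simp [erase_insert fun hat => (mem_erase.mp (h.2 hat)).1 rfl]
  · simp [insert_erase h.2]
  · simp [erase_insert fun hat => (mem_erase.mp (h.2 hat)).1 rfl]

namespace Lagrange

open Polynomial

variable {F : Type*} [Field F] {ι : Type*} [DecidableEq ι] {s : Finset ι} {v : ι → F}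

theorem sum_eval_mul_nodalWeight (hv : Set.InjOn v s) {p : F[X]} (hp : p.degree < #s) :
    ∑ i ∈ s, p.eval (v i) * nodalWeight s v i = p.coeff (#s - 1) := by
  conv_rhs => rw [eq_interpolate hv hp, interpolate_apply, finsetSum_coeff]
  refine sum_congr rfl fun i hi => ?_
  rw [coeff_C_mul, ← natDegree_basis hv hi, coeff_natDegree, leadingCoeff_basis hv hi,
    nodalWeight, prod_inv_distrib]

theorem sum_mul_prod_neg_inv_sub (hv : Set.InjOn v s) :
    ∑ i ∈ s, v i * ∏ j ∈ s.erase i, -(v i - v j)⁻¹ =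
      if #s = 1 then ∑ i ∈ s, v i else if #s = 2 then -1 else 0 := by
  have hsign : ∀ i ∈ s, ∏ j ∈ s.erase i, -(v i - v j)⁻¹ = (-1) ^ (#s - 1) * nodalWeight s v i :=
    fun i hi => by rw [prod_neg, card_erase_of_mem hi, nodalWeight]
  rw [sum_congr rfl fun i hi => by rw [hsign i hi, mul_left_comm], ← mul_sum]
  obtain hs | hs | hs : #s ≤ 1 ∨ #s = 2 ∨ 3 ≤ #s := by omega
  · obtain h0 | h1 : #s = 0 ∨ #s = 1 := by omega
    · simp [card_eq_zero.mp h0]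
    · obtain ⟨a, rfl⟩ := card_eq_one.mp h1
      simp [nodalWeight]
  · have := sum_eval_mul_nodalWeight hv (p := X) (by rw [degree_X, hs]; norm_num)
    simp only [eval_X, hs] at this
    simp [this, hs]
  · have := sum_eval_mul_nodalWeight hv (p := X) (by rw [degree_X]; exact_mod_cast (by omega))
    simp only [eval_X, coeff_X, show ¬ (1 = #s - 1) by omega, if_false] at this
    simp [this, show #s ≠ 1 by omega, show #s ≠ 2 by omega]

theorem sum_mul_prod_one_sub_inv_sub (hv : Set.InjOn v s) :
    ∑ i ∈ s, v i * ∏ j ∈ s.erase i, (1 - (v i - v j)⁻¹) = ∑ i ∈ s, v i - ((#s).choose 2 : ℕ) := by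
  have hsub : ∀ t ∈ s.powerset, Set.InjOn v t := fun t ht => hv.mono (by simpa using ht)
  calc ∑ i ∈ s, v i * ∏ j ∈ s.erase i, (1 - (v i - v j)⁻¹)
      = ∑ i ∈ s, ∑ t ∈ (s.erase i).powerset, v i * ∏ j ∈ t, -(v i - v j)⁻¹ := by
        refine sum_congr rfl fun i _ => ?_
        simp_rw [sub_eq_neg_add _ (v i - _)⁻¹, prod_add, prod_const_one, mul_one, mul_sum]
    _ = ∑ t ∈ s.powerset, if #t = 1 then ∑ i ∈ t, v i else if #t = 2 then -1 else 0 := by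
        rw [sum_sum_powerset_erase]
        exact sum_congr rfl fun t ht => sum_mul_prod_neg_inv_sub (hsub t ht)
    _ = ∑ t ∈ s.powersetCard 1, ∑ i ∈ t, v i - ∑ t ∈ s.powersetCard 2, 1 := by
        simp_rw [powersetCard_eq_filter, sum_filter, ← sum_sub_distrib]
        refine sum_congr rfl fun t _ => ?_
        split_ifs <;> simp_all
    _ = ∑ i ∈ s, v i - ((#s).choose 2 : ℕ) := by
        simp [powersetCard_one, card_powersetCard]

end Lagrange

section PairDiffProd

variable {M : Type*} [CommMonoid M] {K i : ℕ}

theorem Finset.prod_range_erase_eq_mul (hi : i < K) (g : ℕ → M) :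
    ∏ j ∈ (range K).erase i, g j = (∏ j ∈ range i, g j) * ∏ j ∈ Ioo i K, g j := by
  have hsplit : (range K).erase i = range i ∪ Ioo i K := by
    ext j
    simp only [mem_erase, mem_range, mem_union, mem_Ioo]
    omega
  rw [hsplit, prod_union (disjoint_left.mpr fun j hj hj' => by
    simp only [mem_range, mem_Ioo] at hj hj'
    omega)]

theorem Finset.prod_range_prod_Ioo_eq_mul (hi : i < K) (f : ℕ → ℕ → M) :
    ∏ a ∈ range K, ∏ b ∈ Ioo a K, f a b =
      (∏ a ∈ range i, f a i) * (∏ b ∈ Ioo i K, f i b) *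
        ∏ a ∈ (range K).erase i, ∏ b ∈ (Ioo a K).erase i, f a b := by
  have hrow : ∀ a ∈ (range K).erase i,
      ∏ b ∈ Ioo a K, f a b = (if a < i then f a i else 1) * ∏ b ∈ (Ioo a K).erase i, f a b := by
    intro a _
    split_ifs with hai
    · exact (mul_prod_erase _ _ (mem_Ioo.mpr ⟨hai, hi⟩)).symm
    · rw [one_mul, erase_eq_of_notMem fun h => hai (mem_Ioo.mp h).1]
  have hfilter : {a ∈ (range K).erase i | a < i} = range i := by
    ext a
    simp only [mem_filter, mem_erase, mem_range]
    omega
  rw [← mul_prod_erase _ _ (mem_range.mpr hi), prod_congr rfl hrow, prod_mul_distrib, prod_ite,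
    prod_const_one, mul_one, hfilter, mul_left_comm, mul_assoc]

variable {R : Type*} [CommRing R]

def pairDiffProd (K : ℕ) (x : ℕ → R) : R :=
  ∏ a ∈ range K, ∏ b ∈ Ioo a K, (x a - x b)

variable {F : Type*} [Field F] {x : ℕ → F}

theorem pairDiffProd_ne_zero (hx : Set.InjOn x (range K)) : pairDiffProd K x ≠ 0 := by
  refine prod_ne_zero_iff.mpr fun a ha => prod_ne_zero_iff.mpr fun b hb => sub_ne_zero.mpr ?_
  have hb' := mem_Ioo.mp hb
  exact fun h => hb'.1.ne (hx ha (mem_range.mpr hb'.2) h)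

theorem pairDiffProd_update_sub_one (hx : Set.InjOn x (range K)) (hi : i < K) :
    pairDiffProd K (Function.update x i (x i - 1)) =
      pairDiffProd K x * ∏ j ∈ (range K).erase i, (1 - (x i - x j)⁻¹) := by
  set y := Function.update x i (x i - 1) with hy
  have hne : ∀ j < K, j ≠ i → x i - x j ≠ 0 := fun j hj hji =>
    sub_ne_zero.mpr fun h => hji (hx (mem_range.mpr hj) (mem_range.mpr hi) h.symm)
  have hleft : ∀ a ∈ range i, y a - y i = (x a - x i) * (1 - (x i - x a)⁻¹) := fun a ha => by
    have := hne a ((mem_range.mp ha).trans hi) (mem_range.mp ha).ne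
    rw [hy, Function.update_self, Function.update_of_ne (mem_range.mp ha).ne]
    field_simp
    ring
  have hright : ∀ b ∈ Ioo i K, y i - y b = (x i - x b) * (1 - (x i - x b)⁻¹) := fun b hb => by
    have := hne b (mem_Ioo.mp hb).2 (mem_Ioo.mp hb).1.ne'
    rw [hy, Function.update_self, Function.update_of_ne (mem_Ioo.mp hb).1.ne']
    field_simp
    ring
  have hrest : ∀ a ∈ (range K).erase i, ∀ b ∈ (Ioo a K).erase i, y a - y b = x a - x b :=
    fun a ha b hb => by
      rw [hy, Function.update_of_ne (ne_of_mem_erase ha),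
        Function.update_of_ne (ne_of_mem_erase hb)]
  rw [pairDiffProd, pairDiffProd, prod_range_prod_Ioo_eq_mul hi, prod_range_prod_Ioo_eq_mul hi,
    prod_congr rfl hleft, prod_congr rfl hright,
    prod_congr rfl fun a ha => prod_congr rfl (hrest a ha), prod_mul_distrib, prod_mul_distrib,
    prod_range_erase_eq_mul hi fun j => 1 - (x i - x j)⁻¹]
  ring

end PairDiffProd

theorem Finset.prod_sub_mul_prod_sub_eq_factorial {ι κ : Type*} {s : Finset ι} {t : Finset κ}
    {f : ι → ℕ} {g : κ → ℕ} {L : ℕ} (hf : Set.InjOn f s) (hg : Set.InjOn g t)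
    (hfg : ∀ i ∈ s, ∀ k ∈ t, f i ≠ g k) (hfL : ∀ i ∈ s, f i < L) (hgL : ∀ k ∈ t, g k < L)
    (hcard : #s + #t = L) :
    (∏ i ∈ s, (L - f i)) * ∏ k ∈ t, (L - g k) = L ! := by
  classical
  have hdisj : Disjoint (s.image f) (t.image g) := by
    simp only [disjoint_left, mem_image]
    rintro _ ⟨i, hi, rfl⟩ ⟨k, hk, hki⟩
    exact hfg i hi k hk hki.symm
  have hunion : s.image f ∪ t.image g = range L := by
    refine eq_of_subset_of_card_le ?_ ?_
    · simp only [union_subset_iff, image_subset_iff, mem_range]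
      exact ⟨hfL, hgL⟩
    · rw [card_union_of_disjoint hdisj, card_image_of_injOn hf, card_image_of_injOn hg,
        card_range, hcard]
  rw [← prod_image (f := (L - ·)) hf, ← prod_image (f := (L - ·)) hg, ← prod_union hdisj,
    hunion, ← Nat.descFactorial_eq_prod_range, Nat.descFactorial_self]

namespace Finset

section EraseEquiv

variable {α : Type*} [DecidableEq α] {s : Finset α} {c : α} {m : ℕ}

def restrictErase (T : s ≃ Fin (m + 1)) (hT : (T.symm (Fin.last m) : α) = c) :
    s.erase c ≃ Fin m where
  toFun x := (T ⟨x, mem_of_mem_erase x.2⟩).castPred fun h => by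
    rw [← Equiv.eq_symm_apply] at h
    exact (mem_erase.mp x.2).1 ((congrArg Subtype.val h).trans hT)
  invFun y := ⟨T.symm y.castSucc, mem_erase.mpr ⟨fun h => by
    rw [← hT, Subtype.val_inj, T.symm.injective.eq_iff] at h
    exact (Fin.castSucc_lt_last y).ne h, (T.symm _).2⟩⟩
  left_inv x := by simp
  right_inv y := by simp

def extendErase (hc : c ∈ s) (T : s.erase c ≃ Fin m) : s ≃ Fin (m + 1) where
  toFun x := if h : (x : α) = c then Fin.last m else (T ⟨x, mem_erase.mpr ⟨h, x.2⟩⟩).castSucc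
  invFun y :=
    if h : y = Fin.last m then ⟨c, hc⟩
    else ⟨T.symm (y.castPred h), mem_of_mem_erase (T.symm _).2⟩
  left_inv x := by
    by_cases h : (x : α) = c
    · simp [h, ← Subtype.val_inj]
    · simp [h, (Fin.castSucc_lt_last _).ne]
  right_inv y := by
    by_cases h : y = Fin.last m
    · simp [h]
    · simp [h, (mem_erase.mp (T.symm (y.castPred h)).2).1]

variable {T : s ≃ Fin (m + 1)} {T' : s.erase c ≃ Fin m}

@[simp]
theorem castSucc_restrictErase (hT : (T.symm (Fin.last m) : α) = c) (x : s.erase c) :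
    (restrictErase T hT x).castSucc = T ⟨x, mem_of_mem_erase x.2⟩ := by
  simp [restrictErase]

theorem extendErase_of_eq (hc : c ∈ s) {x : s} (hx : (x : α) = c) :
    extendErase hc T' x = Fin.last m :=
  dif_pos hx

theorem extendErase_of_ne (hc : c ∈ s) {x : s} (hx : (x : α) ≠ c) :
    extendErase hc T' x = (T' ⟨x, mem_erase.mpr ⟨hx, x.2⟩⟩).castSucc :=
  dif_neg hx

theorem extendErase_symm_last (hc : c ∈ s) : ((extendErase hc T').symm (Fin.last m) : α) = c := by
  simp [extendErase]

theorem extendErase_restrictErase (hc : c ∈ s) (hT : (T.symm (Fin.last m) : α) = c) :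
    extendErase hc (restrictErase T hT) = T := by
  refine Equiv.ext fun x => ?_
  by_cases hx : (x : α) = c
  · rw [extendErase_of_eq hc hx, eq_comm, ← Equiv.eq_symm_apply]
    exact Subtype.ext (hx.trans hT.symm)
  · rw [extendErase_of_ne hc hx, castSucc_restrictErase]

theorem restrictErase_extendErase (hc : c ∈ s) :
    restrictErase (extendErase hc T') (extendErase_symm_last hc) = T' := by
  refine Equiv.ext fun x => ?_
  rw [← Fin.castSucc_inj, castSucc_restrictErase, extendErase_of_ne hc (mem_erase.mp x.2).1]

end EraseEquiv

variable {α : Type*} [PartialOrder α]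

open Classical in
noncomputable def linearExtensions (s : Finset α) (n : ℕ) : Finset (s ≃ Fin n) :=
  {T | Monotone T}

variable {s : Finset α} {m : ℕ}

@[simp]
theorem mem_linearExtensions {n : ℕ} {T : s ≃ Fin n} : T ∈ s.linearExtensions n ↔ Monotone T := by
  simp [linearExtensions]

theorem maximal_symm_last {T : s ≃ Fin (m + 1)} (hT : Monotone T) :
    Maximal (· ∈ s) (T.symm (Fin.last m) : α) := by
  refine ⟨(T.symm _).2, fun d hd hle => le_of_eq ?_⟩
  have hlast : T ⟨d, hd⟩ = Fin.last m :=
    le_antisymm (Fin.le_last _) (by simpa using hT (show T.symm (Fin.last m) ≤ ⟨d, hd⟩ from hle))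
  rw [← hlast, Equiv.symm_apply_apply]

theorem card_linearExtensions_empty : #((∅ : Finset α).linearExtensions 0) = 1 := by
  rw [card_eq_one]
  refine ⟨Equiv.equivOfIsEmpty _ _, eq_singleton_iff_unique_mem.mpr ⟨?_, fun T _ => ?_⟩⟩
  · simp [Monotone]
  · exact Subsingleton.elim _ _

variable [DecidableEq α] {c : α} {T : s ≃ Fin (m + 1)} {T' : s.erase c ≃ Fin m}

theorem restrictErase_monotone (hT : (T.symm (Fin.last m) : α) = c) (hmono : Monotone T) :
    Monotone (restrictErase T hT) := fun x y hxy => by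
  rw [← Fin.castSucc_le_castSucc_iff, castSucc_restrictErase, castSucc_restrictErase]
  exact hmono (show (x : α) ≤ y from hxy)

theorem extendErase_monotone (hc : Maximal (· ∈ s) c) (hmono : Monotone T') :
    Monotone (extendErase hc.1 T') := fun x y hxy => by
  by_cases hy : (y : α) = c
  · exact (extendErase_of_eq hc.1 hy).symm ▸ Fin.le_last _
  have hx : (x : α) ≠ c := fun hx => hy (le_antisymm (hc.2 y.2 (hx ▸ hxy)) (hx ▸ hxy))
  rw [extendErase_of_ne hc.1 hx, extendErase_of_ne hc.1 hy, Fin.castSucc_le_castSucc_iff]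
  exact hmono (show (x : α) ≤ y from hxy)

open Classical in
theorem card_filter_symm_last_eq (hc : Maximal (· ∈ s) c) :
    #{T ∈ s.linearExtensions (m + 1) | (T.symm (Fin.last m) : α) = c} =
      #((s.erase c).linearExtensions m) := by
  refine card_bij' (fun T hT => restrictErase T (mem_filter.mp hT).2)
    (fun T' _ => extendErase hc.1 T') ?_ ?_ ?_ ?_
  · intro T hT
    simp only [mem_filter, mem_linearExtensions] at hT
    simpa using restrictErase_monotone hT.2 hT.1
  · intro T' hT'
    simp only [mem_filter, mem_linearExtensions] at hT' ⊢
    exact ⟨extendErase_monotone hc hT', extendErase_symm_last hc.1⟩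
  · intro T hT
    exact extendErase_restrictErase hc.1 _
  · intro T' _
    exact restrictErase_extendErase hc.1

open Classical in
theorem card_linearExtensions_succ :
    #(s.linearExtensions (m + 1)) =
      ∑ c ∈ s with Maximal (· ∈ s) c, #((s.erase c).linearExtensions m) := by
  rw [card_eq_sum_card_fiberwise (f := fun T : s ≃ Fin (m + 1) => (T.symm (Fin.last m) : α))]
  · exact sum_congr rfl fun c hc => card_filter_symm_last_eq (mem_filter.mp hc).2
  · intro T hT
    have := maximal_symm_last (mem_linearExtensions.mp hT)
    simp [this, this.1]

end Finset

namespace YoungDiagram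

variable (μ : YoungDiagram)

def shiftedRowLen (K i : ℕ) : ℕ := μ.rowLen i + (K - 1 - i)

def shiftedColLen (K j : ℕ) : ℕ := j + (K - μ.colLen j)

variable {μ} {K : ℕ}

theorem hook_eq (i j : ℕ) : hook μ (i, j) = (μ.rowLen i - j) + (μ.colLen j - (i + 1)) := by
  have hrow : {d ∈ μ.cells | d.1 = i ∧ j ≤ d.2} = {i} ×ˢ Ico j (μ.rowLen i) := by
    ext ⟨a, b⟩
    simp only [mem_filter, mem_cells, mem_product, mem_singleton, mem_Ico]
    constructor
    · rintro ⟨h, rfl, hj⟩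
      exact ⟨rfl, hj, mem_iff_lt_rowLen.mp h⟩
    · rintro ⟨rfl, hj, h⟩
      exact ⟨mem_iff_lt_rowLen.mpr h, rfl, hj⟩
  have hcol : {d ∈ μ.cells | d.2 = j ∧ i < d.1} = Ioo i (μ.colLen j) ×ˢ {j} := by
    ext ⟨a, b⟩
    simp only [mem_filter, mem_cells, mem_product, mem_singleton, mem_Ioo]
    constructor
    · rintro ⟨h, rfl, hi⟩
      exact ⟨⟨hi, mem_iff_lt_colLen.mp h⟩, rfl⟩
    · rintro ⟨⟨hi, h⟩, rfl⟩
      exact ⟨mem_iff_lt_colLen.mpr h, rfl, hi⟩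
  rw [hook, hrow, hcol, card_product, card_product, Nat.card_Ico, Nat.card_Ioo]
  simp only [card_singleton, one_mul, mul_one]
  omega

theorem colLen_le_of_colLen_zero_le (hK : μ.colLen 0 ≤ K) (j : ℕ) : μ.colLen j ≤ K :=
  (μ.colLen_anti 0 j j.zero_le).trans hK

theorem fst_lt_of_mem (hK : μ.colLen 0 ≤ K) {c : ℕ × ℕ} (hc : c ∈ μ) : c.1 < K :=
  (mem_iff_lt_colLen.mp (μ.up_left_mem le_rfl c.2.zero_le hc)).trans_le hK

theorem rowLen_eq_zero_of_le (hK : μ.colLen 0 ≤ K) {i : ℕ} (hi : K ≤ i) : μ.rowLen i = 0 := by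
  by_contra h
  exact (fst_lt_of_mem hK (mem_iff_lt_rowLen.mpr (Nat.pos_of_ne_zero h))).not_ge hi

@[to_additive]
theorem prod_cells_eq {M : Type*} [CommMonoid M] (hK : μ.colLen 0 ≤ K) (f : ℕ × ℕ → M) :
    ∏ c ∈ μ.cells, f c = ∏ i ∈ range K, ∏ j ∈ range (μ.rowLen i), f (i, j) := by
  rw [← prod_fiberwise_of_maps_to (g := Prod.fst) fun c hc => mem_range.mpr (fst_lt_of_mem hK hc)]
  refine prod_congr rfl fun i _ => ?_
  rw [← row, row_eq_prod, prod_product, prod_singleton]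

theorem card_eq_sum_rowLen (hK : μ.colLen 0 ≤ K) : μ.card = ∑ i ∈ range K, μ.rowLen i := by
  rw [YoungDiagram.card, card_eq_sum_ones, sum_cells_eq hK]
  simp

theorem colLen_zero_le_card : μ.colLen 0 ≤ μ.card := by
  rw [colLen_eq_card]
  exact card_filter_le _ _

theorem shiftedRowLen_strictAntiOn :
    StrictAntiOn (μ.shiftedRowLen K) (Set.Iio K) := fun i _ i' hi' hii' => by
  have := μ.rowLen_anti i i' hii'.le
  simp only [shiftedRowLen, Set.mem_Iio] at *
  omega

theorem shiftedColLen_strictMono (hK : μ.colLen 0 ≤ K) : StrictMono (μ.shiftedColLen K) :=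
  fun j j' hjj' => by
  have := μ.colLen_anti j j' hjj'.le
  have := colLen_le_of_colLen_zero_le hK j
  simp only [shiftedColLen]
  omega

theorem hook_add_shiftedColLen (hK : μ.colLen 0 ≤ K) {i j : ℕ} (hj : j < μ.rowLen i) :
    hook μ (i, j) + μ.shiftedColLen K j = μ.shiftedRowLen K i := by
  have := mem_iff_lt_colLen.mp (mem_iff_lt_rowLen.mpr hj)
  have := colLen_le_of_colLen_zero_le hK j
  rw [hook_eq, shiftedColLen, shiftedRowLen]
  omega

theorem shiftedColLen_ne_shiftedRowLen (hK : μ.colLen 0 ≤ K) {i : ℕ} (hi : i < K) (j : ℕ) :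
    μ.shiftedColLen K j ≠ μ.shiftedRowLen K i := by
  have := colLen_le_of_colLen_zero_le hK j
  have hiff : i < μ.colLen j ↔ j < μ.rowLen i := by rw [← mem_iff_lt_colLen, mem_iff_lt_rowLen]
  simp only [shiftedColLen, shiftedRowLen]
  omega

theorem prod_hook_row_mul_prod_sub (hK : μ.colLen 0 ≤ K) {i : ℕ} (hi : i < K) :
    (∏ j ∈ range (μ.rowLen i), hook μ (i, j)) *
        ∏ b ∈ Ioo i K, (μ.shiftedRowLen K i - μ.shiftedRowLen K b) =
      (μ.shiftedRowLen K i)! := by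
  have hhook : ∀ j ∈ range (μ.rowLen i),
      hook μ (i, j) = μ.shiftedRowLen K i - μ.shiftedColLen K j :=
    fun j hj => by have := hook_add_shiftedColLen hK (mem_range.mp hj); omega
  have hanti := shiftedRowLen_strictAntiOn (μ := μ) (K := K)
  rw [prod_congr rfl hhook]
  refine prod_sub_mul_prod_sub_eq_factorial (shiftedColLen_strictMono hK).injective.injOn
    (hanti.injOn.mono fun b hb => (mem_Ioo.mp hb).2) ?_ ?_ ?_ ?_
  · exact fun j _ b hb => shiftedColLen_ne_shiftedRowLen hK (mem_Ioo.mp hb).2 j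
  · intro j hj
    have := hook_add_shiftedColLen hK (mem_range.mp hj)
    have := hook_eq (μ := μ) i j
    have := mem_range.mp hj
    omega
  · intro b hb
    exact hanti (Set.mem_Iio.mpr hi) (Set.mem_Iio.mpr (mem_Ioo.mp hb).2) (mem_Ioo.mp hb).1
  · rw [card_range, Nat.card_Ioo, shiftedRowLen]
    omega

theorem prod_hook_mul_pairDiffProd {R : Type*} [CommRing R] (hK : μ.colLen 0 ≤ K) :
    (∏ c ∈ μ.cells, (hook μ c : R)) * pairDiffProd K (fun i => (μ.shiftedRowLen K i : R)) =
      ∏ i ∈ range K, ((μ.shiftedRowLen K i)! : R) := by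
  rw [prod_cells_eq hK, pairDiffProd, ← prod_mul_distrib]
  refine prod_congr rfl fun i hi => ?_
  have hsub : ∀ b ∈ Ioo i K, ((μ.shiftedRowLen K i - μ.shiftedRowLen K b : ℕ) : R) =
      μ.shiftedRowLen K i - μ.shiftedRowLen K b := fun b hb =>
    Nat.cast_sub (shiftedRowLen_strictAntiOn (mem_range.mp hi) (mem_Ioo.mp hb).2
      (mem_Ioo.mp hb).1).le
  rw [← prod_hook_row_mul_prod_sub hK (mem_range.mp hi), Nat.cast_mul, Nat.cast_prod,
    Nat.cast_prod, prod_congr rfl hsub]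

theorem sum_shiftedRowLen (hK : μ.colLen 0 ≤ K) :
    ∑ i ∈ range K, μ.shiftedRowLen K i = μ.card + K.choose 2 := by
  simp only [shiftedRowLen, sum_add_distrib, ← card_eq_sum_rowLen hK]
  rw [sum_range_reflect (fun i => i) K, sum_range_id, Nat.choose_two_right]

theorem maximal_mem_iff {i j : ℕ} :
    Maximal (· ∈ μ) (i, j) ↔ j + 1 = μ.rowLen i ∧ μ.rowLen (i + 1) ≤ j := by
  constructor
  · rintro ⟨hmem, hmax⟩
    have hright : (i, j + 1) ∉ μ := fun h => by simpa using hmax h (by simp)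
    have hbelow : (i + 1, j) ∉ μ := fun h => by simpa using hmax h (by simp)
    rw [mem_iff_lt_rowLen] at hmem hright hbelow
    omega
  · rintro ⟨hrow, hnext⟩
    refine ⟨mem_iff_lt_rowLen.mpr (by omega), fun ⟨a, b⟩ hab hle => ?_⟩
    obtain ⟨hia, hjb⟩ := Prod.mk_le_mk.mp hle
    obtain rfl : a = i := by
      by_contra hne
      have := mem_iff_lt_rowLen.mp (μ.up_left_mem (show i + 1 ≤ a by omega) hjb hab)
      omega
    have := mem_iff_lt_rowLen.mp hab
    exact Prod.mk_le_mk.mpr ⟨le_rfl, by omega⟩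

/-- The cells of `μ` not weakly below-right of `c`: for a corner `c` this removes `c` alone. -/
def eraseCorner (μ : YoungDiagram) (c : ℕ × ℕ) : YoungDiagram where
  cells := {d ∈ μ.cells | ¬c ≤ d}
  isLowerSet a b hba ha := by
    simp only [coe_filter, Set.mem_ofPred_eq, mem_cells] at ha ⊢
    exact ⟨μ.isLowerSet hba ha.1, fun h => ha.2 (h.trans hba)⟩

section Corner

variable {c : ℕ × ℕ}

theorem eraseCorner_le : μ.eraseCorner c ≤ μ := fun _ hd => (mem_filter.mp hd).1

theorem cells_eraseCorner (hc : Maximal (· ∈ μ) c) : (μ.eraseCorner c).cells = μ.cells.erase c := by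
  ext d
  simp only [eraseCorner, mem_filter, mem_erase, mem_cells]
  constructor
  · rintro ⟨hd, hcd⟩
    exact ⟨fun h => hcd (h ▸ le_rfl), hd⟩
  · rintro ⟨hdc, hd⟩
    exact ⟨hd, fun hcd => hdc (le_antisymm (hc.2 hd hcd) hcd)⟩

theorem card_eraseCorner (hc : Maximal (· ∈ μ) c) : (μ.eraseCorner c).card + 1 = μ.card := by
  rw [YoungDiagram.card, cells_eraseCorner hc, card_erase_add_one hc.1]

theorem colLen_le_colLen_of_le {ν : YoungDiagram} (h : ν ≤ μ) (j : ℕ) :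
    ν.colLen j ≤ μ.colLen j := by
  by_contra! hlt
  exact (mem_iff_lt_colLen.mp (h (mem_iff_lt_colLen.mpr hlt))).false

theorem rowLen_eraseCorner (hc : Maximal (· ∈ μ) c) (i : ℕ) :
    (μ.eraseCorner c).rowLen i = if i = c.1 then μ.rowLen i - 1 else μ.rowLen i := by
  rw [rowLen_eq_card, rowLen_eq_card, row, cells_eraseCorner hc, filter_erase, ← row]
  split_ifs with hi
  · exact card_erase_of_mem (mem_row_iff.mpr ⟨hc.1, hi.symm⟩)
  · exact congrArg card (erase_eq_of_notMem fun h => hi (mem_row_iff.mp h).2.symm)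

theorem shiftedRowLen_eraseCorner (hc : Maximal (· ∈ μ) c) :
    (μ.eraseCorner c).shiftedRowLen K =
      Function.update (μ.shiftedRowLen K) c.1 (μ.shiftedRowLen K c.1 - 1) := by
  have hpos := mem_iff_lt_rowLen.mp hc.1
  funext i
  by_cases hi : i = c.1
  · subst hi
    simp only [shiftedRowLen, rowLen_eraseCorner hc, if_true, Function.update_self]
    omega
  · simp [shiftedRowLen, rowLen_eraseCorner hc, hi]

theorem shiftedRowLen_pos (hc : c ∈ μ) : 0 < μ.shiftedRowLen K c.1 :=
  Nat.add_pos_left (mem_iff_lt_rowLen.mp hc |>.trans_le' c.2.zero_le) _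

theorem prod_factorial_shiftedRowLen_eraseCorner (hK : μ.colLen 0 ≤ K)
    (hc : Maximal (· ∈ μ) c) :
    ∏ i ∈ range K, (μ.shiftedRowLen K i)! =
      μ.shiftedRowLen K c.1 * ∏ i ∈ range K, ((μ.eraseCorner c).shiftedRowLen K i)! := by
  have hi := mem_range.mpr (fst_lt_of_mem hK hc.1)
  rw [shiftedRowLen_eraseCorner hc, ← mul_prod_erase _ _ hi, ← mul_prod_erase _ _ hi,
    Function.update_self, ← mul_assoc, Nat.mul_factorial_pred (shiftedRowLen_pos hc.1).ne']
  congr 1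
  exact prod_congr rfl fun i hi' => by rw [Function.update_of_ne (ne_of_mem_erase hi')]

end Corner

def hookRatio (μ : YoungDiagram) (F : Type*) [Field F] (K i : ℕ) : F :=
  (μ.shiftedRowLen K i : F) *
    ∏ j ∈ (range K).erase i, (1 - ((μ.shiftedRowLen K i : F) - μ.shiftedRowLen K j)⁻¹)

variable {F : Type*} [Field F] [CharZero F]

theorem injOn_shiftedRowLen_cast : Set.InjOn (fun i => (μ.shiftedRowLen K i : F)) (range K) := by
  rw [coe_range]
  exact Nat.cast_injective.comp_injOn shiftedRowLen_strictAntiOn.injOn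

theorem prod_hook_eq_of_maximal (hK : μ.colLen 0 ≤ K) {c : ℕ × ℕ} (hc : Maximal (· ∈ μ) c) :
    ∏ e ∈ μ.cells, (hook μ e : F) =
      (∏ e ∈ (μ.eraseCorner c).cells, (hook (μ.eraseCorner c) e : F)) * μ.hookRatio F K c.1 := by
  have hinj := injOn_shiftedRowLen_cast (μ := μ) (K := K) (F := F)
  have hH := prod_hook_mul_pairDiffProd (R := F) hK
  have hH' := prod_hook_mul_pairDiffProd (R := F)
    ((colLen_le_colLen_of_le eraseCorner_le 0).trans hK : (μ.eraseCorner c).colLen 0 ≤ K)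
  have hcast : (fun i => ((μ.eraseCorner c).shiftedRowLen K i : F)) =
      Function.update (fun i => (μ.shiftedRowLen K i : F)) c.1
        ((μ.shiftedRowLen K c.1 : F) - 1) := by
    funext i
    rw [shiftedRowLen_eraseCorner hc]
    by_cases hi : i = c.1
    · subst hi
      simp [Nat.cast_pred (shiftedRowLen_pos hc.1)]
    · simp [hi]
  rw [hcast, pairDiffProd_update_sub_one hinj (fst_lt_of_mem hK hc.1)] at hH'
  have hF := congrArg (Nat.cast : ℕ → F) (prod_factorial_shiftedRowLen_eraseCorner hK hc)
  push_cast at hF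
  refine mul_right_cancel₀ (pairDiffProd_ne_zero hinj) ?_
  rw [hookRatio]
  linear_combination hH + hF - (μ.shiftedRowLen K c.1 : F) * hH'

theorem hookRatio_eq_zero (hK : μ.colLen 0 ≤ K) {i : ℕ} (hi : i < K)
    (hrow : μ.rowLen (i + 1) = μ.rowLen i) : μ.hookRatio F K i = 0 := by
  rw [hookRatio]
  rcases (Nat.succ_le_of_lt hi).lt_or_eq with hi' | hi'
  · refine mul_eq_zero_of_right _ (prod_eq_zero (mem_erase.mpr ⟨by omega, mem_range.mpr hi'⟩) ?_)
    have : μ.shiftedRowLen K i = μ.shiftedRowLen K (i + 1) + 1 := by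
      simp only [shiftedRowLen]
      omega
    simp [this]
  · have hzero := rowLen_eq_zero_of_le hK hi'.ge
    rw [hrow] at hzero
    refine mul_eq_zero_of_left ?_ _
    simp only [shiftedRowLen, hzero, Nat.cast_eq_zero]
    omega

open Classical in
theorem sum_hookRatio_maximal (hK : μ.colLen 0 ≤ K) :
    ∑ c ∈ μ.cells with Maximal (· ∈ μ) c, μ.hookRatio F K c.1 = μ.card := by
  rw [sum_of_injOn Prod.fst (t := range K) (g := μ.hookRatio F K)]
  · simp only [hookRatio]
    rw [Lagrange.sum_mul_prod_one_sub_inv_sub injOn_shiftedRowLen_cast, card_range,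
      ← Nat.cast_sum, sum_shiftedRowLen hK]
    push_cast
    ring
  · rintro ⟨i, j⟩ hij ⟨i', j'⟩ hij' (rfl : i = i')
    have h := maximal_mem_iff.mp (mem_filter.mp hij).2
    have h' := maximal_mem_iff.mp (mem_filter.mp hij').2
    exact Prod.ext rfl (by omega)
  · exact fun c hc => mem_range.mpr (fst_lt_of_mem hK (mem_filter.mp hc).1)
  · intro i hi hnot
    refine hookRatio_eq_zero hK (mem_range.mp hi) ?_
    by_contra hne
    have hlt := (μ.rowLen_anti i (i + 1) (Nat.le_succ i)).lt_of_ne hne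
    refine hnot ⟨(i, μ.rowLen i - 1), mem_filter.mpr ⟨?_, ?_⟩, rfl⟩
    · exact mem_iff_lt_rowLen.mpr (by omega)
    · exact maximal_mem_iff.mpr ⟨by omega, by omega⟩
  · exact fun _ _ => rfl

theorem card_linearExtensions_mul_prod_hook (μ : YoungDiagram) :
    #(μ.cells.linearExtensions μ.card) * ∏ c ∈ μ.cells, hook μ c = μ.card ! := by
  induction h : μ.card generalizing μ with
  | zero =>
    rw [card_eq_zero.mp h, card_linearExtensions_empty]
    rfl
  | succ m ih =>
    classical
    have hK : μ.colLen 0 ≤ m + 1 := h ▸ colLen_zero_le_card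
    have hcorner : ∀ c ∈ {c ∈ μ.cells | Maximal (· ∈ μ) c},
        (#((μ.cells.erase c).linearExtensions m) : ℚ) * ∏ e ∈ μ.cells, (hook μ e : ℚ) =
          m ! * μ.hookRatio ℚ (m + 1) c.1 := by
      intro c hc
      have hc := (mem_filter.mp hc).2
      have hcard : (μ.eraseCorner c).card = m := by have := card_eraseCorner hc; omega
      rw [prod_hook_eq_of_maximal hK hc, ← mul_assoc, ← cells_eraseCorner hc]
      congr 1
      exact_mod_cast ih (μ.eraseCorner c) hcard
    have hQ : (#(μ.cells.linearExtensions (m + 1)) : ℚ) * ∏ e ∈ μ.cells, (hook μ e : ℚ) =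
        (m + 1)! := by
      simp only [card_linearExtensions_succ, mem_cells]
      rw [Nat.cast_sum, sum_mul, sum_congr rfl hcorner, ← mul_sum,
        sum_hookRatio_maximal hK, h, Nat.factorial_succ]
      push_cast
      ring
    exact_mod_cast hQ

end YoungDiagram

open Classical in
theorem stmt15_general (μ : YoungDiagram) (n : ℕ) (hn : μ.card = n)
    (P : Cell μ ≃ Fin n) :
    Polynomial.eval 1 (piP μ n P) =
      ((Finset.univ.filter fun Q : Cell μ ≃ Fin n => IsSYT μ n Q).card : ℤ) ∧
    (Finset.univ.filter fun Q : Cell μ ≃ Fin n => IsSYT μ n Q).card *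
        ∏ c ∈ μ.cells, hook μ c = Nat.factorial n := by
  have hSYT : (Finset.univ.filter fun Q : Cell μ ≃ Fin n => IsSYT μ n Q) =
      μ.cells.linearExtensions n := by
    ext T
    simp only [mem_filter, mem_univ, true_and, mem_linearExtensions]
    rfl
  refine ⟨by simp [piP, Polynomial.eval_finsetSum], ?_⟩
  subst hn
  rw [hSYT]
  exact μ.card_linearExtensions_mul_prod_hook

open Classical in
/-- `π_λ(1) = |st_λ|`, and the hook length formula
`|st_λ| = n! / Π_{α∈λ} h_α` (stated multiplied out). -/
theorem stmt15 (μ : YoungDiagram) (n : ℕ) (hn : μ.card = n)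
    (P : Cell μ ≃ Fin n) (hP : IsSYT μ n P) :
    Polynomial.eval 1 (piP μ n P) =
      ((Finset.univ.filter fun Q : Cell μ ≃ Fin n => IsSYT μ n Q).card : ℤ) ∧
    (Finset.univ.filter fun Q : Cell μ ≃ Fin n => IsSYT μ n Q).card *
        ∏ c ∈ μ.cells, hook μ c = Nat.factorial n :=
  stmt15_general μ n hn P
end
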